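/- arXiv:1811.00952 — 5 statements merged into one kernel-verified Lean document; each statement's English description precedes it below -/
import Mathlib

section
/- Let τ and σ be two nonnegative random variables on a probability space with τ ≤ σ almost surely. Then, with the convention 0/0 := 0, the supremum over t ∈ [0,∞) of the ratio 1_{τ ≤ t < σ} / E[1_{τ ≤ t < σ}] is almost surely finite. -/
open MeasureTheory Set ENNReal

/-- The "right" bad set is null: the set of `ω` such that some `t` with
`P(τ ≤ t < σ) = 0` satisfies `τ ω ≤ t < q < σ ω` has measure zero. -/
lemma aux_right {Ω : Type*} [MeasurableSpace Ω] (P : Measure Ω) (τ σ : Ω → ℝ) (q : ℝ) :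
    P {ω | ∃ t, P {ω' | τ ω' ≤ t ∧ t < σ ω'} = 0 ∧ τ ω ≤ t ∧ t < q ∧ q < σ ω} = 0 := by
  set Z : Set ℝ := {t | P {ω' | τ ω' ≤ t ∧ t < σ ω'} = 0 ∧ t < q} with hZ
  by_cases hne : Z.Nonempty
  · have hbdd : BddAbove Z := ⟨q, fun t ht => le_of_lt ht.2⟩
    set s := sSup Z with hs
    have hsq : s ≤ q := csSup_le hne fun t ht => le_of_lt ht.2
    by_cases h0 : P {ω' | τ ω' ≤ s ∧ s < σ ω'} = 0
    · refine measure_mono_null ?_ h0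
      rintro ω ⟨t, ht0, hτt, htq, hqσ⟩
      exact ⟨le_trans hτt (le_csSup hbdd ⟨ht0, htq⟩), lt_of_le_of_lt hsq hqσ⟩
    · have hsub : {ω | ∃ t, P {ω' | τ ω' ≤ t ∧ t < σ ω'} = 0 ∧ τ ω ≤ t ∧ t < q ∧ q < σ ω} ⊆
          ⋃ n : ℕ, {ω | τ ω ≤ s - 1 / (n + 1) ∧ q < σ ω} := by
        rintro ω ⟨t, ht0, hτt, htq, hqσ⟩
        have htZ : t ∈ Z := ⟨ht0, htq⟩
        have hts : t < s := lt_of_le_of_ne (le_csSup hbdd htZ) (by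
          rintro rfl; exact h0 ht0)
        obtain ⟨n, hn⟩ := exists_nat_one_div_lt (sub_pos.2 hts)
        exact mem_iUnion.2 ⟨n, ⟨le_of_lt (by linarith), hqσ⟩⟩
      refine measure_mono_null hsub (measure_iUnion_null fun n => ?_)
      have h1n : (0:ℝ) < 1 / (n + 1) := by positivity
      obtain ⟨z, hzZ, hzlt⟩ := exists_lt_of_lt_csSup hne (show s - 1 / (n+1:ℝ) < s by linarith)
      refine measure_mono_null ?_ hzZ.1
      rintro ω ⟨h1, h2⟩
      exact ⟨le_of_lt (lt_of_le_of_lt h1 hzlt), lt_trans hzZ.2 h2⟩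
  · have : {ω | ∃ t, P {ω' | τ ω' ≤ t ∧ t < σ ω'} = 0 ∧ τ ω ≤ t ∧ t < q ∧ q < σ ω} = ∅ := by
      ext ω; simp only [mem_setOf_eq, mem_empty_iff_false, iff_false]
      rintro ⟨t, ht0, _, htq, _⟩
      exact hne ⟨t, ht0, htq⟩
    rw [this, measure_empty]

/-- The "left" bad set is null: the set of `ω` such that some `t` with
`P(τ < t ≤ σ) = 0` satisfies `τ ω < q < t ≤ σ ω` has measure zero. -/
lemma aux_left {Ω : Type*} [MeasurableSpace Ω] (P : Measure Ω) (τ σ : Ω → ℝ) (q : ℝ) :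
    P {ω | ∃ t, P {ω' | τ ω' < t ∧ t ≤ σ ω'} = 0 ∧ q < t ∧ τ ω < q ∧ t ≤ σ ω} = 0 := by
  set Z : Set ℝ := {t | P {ω' | τ ω' < t ∧ t ≤ σ ω'} = 0 ∧ q < t} with hZ
  by_cases hne : Z.Nonempty
  · have hbdd : BddBelow Z := ⟨q, fun t ht => le_of_lt ht.2⟩
    set s := sInf Z with hs
    have hqs : q ≤ s := le_csInf hne fun t ht => le_of_lt ht.2
    by_cases h0 : P {ω' | τ ω' < s ∧ s ≤ σ ω'} = 0
    · refine measure_mono_null ?_ h0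
      rintro ω ⟨t, ht0, hqt, hτq, htσ⟩
      exact ⟨lt_of_lt_of_le hτq hqs, le_trans (csInf_le hbdd ⟨ht0, hqt⟩) htσ⟩
    · have hsub : {ω | ∃ t, P {ω' | τ ω' < t ∧ t ≤ σ ω'} = 0 ∧ q < t ∧ τ ω < q ∧ t ≤ σ ω} ⊆
          ⋃ n : ℕ, {ω | τ ω < q ∧ s + 1 / (n + 1) ≤ σ ω} := by
        rintro ω ⟨t, ht0, hqt, hτq, htσ⟩
        have htZ : t ∈ Z := ⟨ht0, hqt⟩
        have hst : s < t := lt_of_le_of_ne (csInf_le hbdd htZ) (by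
          rintro rfl; exact h0 ht0)
        obtain ⟨n, hn⟩ := exists_nat_one_div_lt (sub_pos.2 hst)
        exact mem_iUnion.2 ⟨n, ⟨hτq, le_trans (le_of_lt (by linarith)) htσ⟩⟩
      refine measure_mono_null hsub (measure_iUnion_null fun n => ?_)
      have h1n : (0:ℝ) < 1 / (n + 1) := by positivity
      obtain ⟨z, hzZ, hzlt⟩ := exists_lt_of_csInf_lt hne (show s < s + 1 / (n+1:ℝ) by linarith)
      refine measure_mono_null ?_ hzZ.1
      rintro ω ⟨h1, h2⟩
      exact ⟨lt_trans h1 hzZ.2, le_trans (le_of_lt hzlt) h2⟩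
  · have : {ω | ∃ t, P {ω' | τ ω' < t ∧ t ≤ σ ω'} = 0 ∧ q < t ∧ τ ω < q ∧ t ≤ σ ω} = ∅ := by
      ext ω; simp only [mem_setOf_eq, mem_empty_iff_false, iff_false]
      rintro ⟨t, ht0, hqt, _, _⟩
      exact hne ⟨t, ht0, hqt⟩
    rw [this, measure_empty]

/-- Pointwise lemma: if `ω` avoids all the (countably many) bad sets, then the probabilities
`P(τ ≤ t < σ)` are uniformly bounded below for `t ∈ [τ ω, σ ω)`. -/
lemma aux_pointwise {Ω : Type*} [MeasurableSpace Ω] (P : Measure Ω) (τ σ : Ω → ℝ) (ω : Ω)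
    (hbR : ∀ q : ℚ, ¬ (∃ t, P {ω' | τ ω' ≤ t ∧ t < σ ω'} = 0 ∧
      τ ω ≤ t ∧ t < (q:ℝ) ∧ (q:ℝ) < σ ω))
    (hbL : ∀ q : ℚ, ¬ (∃ t, P {ω' | τ ω' < t ∧ t ≤ σ ω'} = 0 ∧
      (q:ℝ) < t ∧ τ ω < (q:ℝ) ∧ t ≤ σ ω)) :
    ∃ c : ℝ≥0∞, 0 < c ∧ ∀ t, τ ω ≤ t → t < σ ω → c ≤ P {ω' | τ ω' ≤ t ∧ t < σ ω'} := by
  by_contra hcon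
  push_neg at hcon
  set a := τ ω with ha
  set b := σ ω with hb
  set f : ℝ → ℝ≥0∞ := fun t => P {ω' | τ ω' ≤ t ∧ t < σ ω'} with hf
  set h : ℝ → ℝ≥0∞ := fun t => ⨅ s ∈ Ico a b ∩ Iic t, f s with hh
  set Zh : Set ℝ := {t | h t = 0} with hZh
  -- b ∈ Zh
  have hbZ : b ∈ Zh := by
    by_contra hbne
    have hpos : 0 < h b := pos_iff_ne_zero.2 hbne
    obtain ⟨t, hat, htb, hft⟩ := hcon (h b) hpos
    have : h b ≤ f t := iInf₂_le t ⟨⟨hat, htb⟩, le_of_lt htb⟩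
    exact absurd (lt_of_le_of_lt this hft) (lt_irrefl _)
  have hZne : Zh.Nonempty := ⟨b, hbZ⟩
  -- every element of Zh is ≥ a
  have hZbdd : BddBelow Zh := by
    refine ⟨a, fun t ht => ?_⟩
    by_contra hta
    push_neg at hta
    have hempty : Ico a b ∩ Iic t = ∅ := by
      ext s; simp only [mem_inter_iff, mem_Ico, mem_Iic, mem_empty_iff_false, iff_false]
      rintro ⟨⟨has, _⟩, hst⟩; linarith
    have : h t = ⊤ := by rw [hh]; simp [hempty]
    rw [hZh] at ht; simp only [mem_setOf_eq] at ht
    rw [ht] at this; exact ENNReal.zero_ne_top this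
  set t₀ := sInf Zh with ht₀
  have hat₀ : a ≤ t₀ := le_csInf hZne fun t ht => by
    by_contra hta
    push_neg at hta
    have hempty : Ico a b ∩ Iic t = ∅ := by
      ext s; simp only [mem_inter_iff, mem_Ico, mem_Iic, mem_empty_iff_false, iff_false]
      rintro ⟨⟨has, _⟩, hst⟩; linarith
    have : h t = ⊤ := by rw [hh]; simp [hempty]
    rw [hZh] at ht; simp only [mem_setOf_eq] at ht
    rw [ht] at this; exact ENNReal.zero_ne_top this
  have ht₀b : t₀ ≤ b := csInf_le hZbdd hbZ
  by_cases hi : ∀ ε : ℝ≥0∞, 0 < ε → ∀ δ : ℝ, 0 < δ →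
      ∃ s, (a ≤ s ∧ s < b) ∧ t₀ ≤ s ∧ s < t₀ + δ ∧ f s < ε
  · -- small values of f accumulate at t₀ from the right; contradiction with hbR
    obtain ⟨s₁, hs₁, hs₁', _, _⟩ := hi 1 one_pos 1 one_pos
    have ht₀lt : t₀ < b := lt_of_le_of_lt hs₁' hs₁.2
    have hft₀ : f t₀ = 0 := by
      have hcover : {ω' | τ ω' ≤ t₀ ∧ t₀ < σ ω'} ⊆
          ⋃ n : ℕ, {ω' | τ ω' ≤ t₀ ∧ t₀ + 1 / (n + 1) < σ ω'} := by
        rintro ω' ⟨h1, h2⟩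
        obtain ⟨n, hn⟩ := exists_nat_one_div_lt (sub_pos.2 h2)
        exact mem_iUnion.2 ⟨n, ⟨h1, by linarith⟩⟩
      refine measure_mono_null hcover (measure_iUnion_null fun n => ?_)
      by_contra hpos'
      have hpos : 0 < P {ω' | τ ω' ≤ t₀ ∧ t₀ + 1 / (n + 1) < σ ω'} :=
        pos_iff_ne_zero.2 hpos'
      have h1n : (0:ℝ) < 1 / (n + 1) := by positivity
      obtain ⟨s, hs, hts, hsδ, hfs⟩ := hi _ hpos (1 / (n + 1)) h1n
      have hsub : {ω' | τ ω' ≤ t₀ ∧ t₀ + 1 / (n + 1) < σ ω'} ⊆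
          {ω' | τ ω' ≤ s ∧ s < σ ω'} := by
        rintro ω' ⟨h1, h2⟩
        exact ⟨le_trans h1 hts, lt_trans (by linarith) h2⟩
      exact absurd (lt_of_le_of_lt (measure_mono hsub) hfs) (lt_irrefl _)
    obtain ⟨q, hq1, hq2⟩ := exists_rat_btwn ht₀lt
    exact hbR q ⟨t₀, hft₀, hat₀, hq1, hq2⟩
  · -- small values of f accumulate at t₀ strictly from the left; contradiction with hbL
    push_neg at hi
    obtain ⟨ε₀, hε₀, δ₀, hδ₀, hii⟩ := hi
    -- key claim L
    have L : ∀ ε : ℝ≥0∞, 0 < ε → ∀ δ : ℝ, 0 < δ →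
        ∃ s, (a ≤ s ∧ s < b) ∧ t₀ - δ < s ∧ s < t₀ ∧ f s < ε := by
      intro ε hε δ hδ
      have hnmem : h (t₀ - δ) ≠ 0 := by
        intro h0
        have : t₀ ≤ t₀ - δ := csInf_le hZbdd h0
        linarith
      have hhp : 0 < h (t₀ - δ) := pos_iff_ne_zero.2 hnmem
      set ε₂ := min (min ε ε₀) (h (t₀ - δ)) with hε₂def
      have hε₂ : 0 < ε₂ := lt_min (lt_min hε hε₀) hhp
      obtain ⟨z, hzZ, hzlt⟩ := exists_lt_of_csInf_lt hZne
        (show sInf Zh < t₀ + δ₀ / 2 by rw [← ht₀]; linarith)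
      have hz0 : h z = 0 := hzZ
      obtain ⟨s, hsmem, hfs⟩ : ∃ s ∈ Ico a b ∩ Iic z, f s < ε₂ := by
        by_contra hno
        push_neg at hno
        have : ε₂ ≤ h z := le_iInf fun s => le_iInf fun hs => hno s hs
        rw [hz0] at this
        exact absurd (lt_of_lt_of_le hε₂ this) (lt_irrefl _)
      obtain ⟨⟨has, hsb⟩, hsz⟩ := hsmem
      have hsz' : s ≤ z := hsz
      have hst₀ : s < t₀ := by
        by_contra hge
        push_neg at hge
        have : ε₀ ≤ f s := hii s ⟨has, hsb⟩ hge (by linarith)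
        have : ε₂ ≤ f s := le_trans (le_trans (min_le_left _ _) (min_le_right _ _)) this
        exact absurd (lt_of_le_of_lt this hfs) (lt_irrefl _)
      have hsδ : t₀ - δ < s := by
        by_contra hge
        push_neg at hge
        have : h (t₀ - δ) ≤ f s := iInf₂_le s ⟨⟨has, hsb⟩, hge⟩
        have : ε₂ ≤ f s := le_trans (min_le_right _ _) this
        exact absurd (lt_of_le_of_lt this hfs) (lt_irrefl _)
      exact ⟨s, ⟨has, hsb⟩, hsδ, hst₀, lt_of_lt_of_le hfs
        (le_trans (min_le_left _ _) (min_le_left _ _))⟩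
    obtain ⟨s₁, hs₁, _, hs₁t₀, _⟩ := L 1 one_pos 1 one_pos
    have hat₀' : a < t₀ := lt_of_le_of_lt hs₁.1 hs₁t₀
    have hgt₀ : P {ω' | τ ω' < t₀ ∧ t₀ ≤ σ ω'} = 0 := by
      have hcover : {ω' | τ ω' < t₀ ∧ t₀ ≤ σ ω'} ⊆
          ⋃ n : ℕ, {ω' | τ ω' ≤ t₀ - 1 / (n + 1) ∧ t₀ ≤ σ ω'} := by
        rintro ω' ⟨h1, h2⟩
        obtain ⟨n, hn⟩ := exists_nat_one_div_lt (sub_pos.2 h1)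
        exact mem_iUnion.2 ⟨n, ⟨le_of_lt (by linarith), h2⟩⟩
      refine measure_mono_null hcover (measure_iUnion_null fun n => ?_)
      by_contra hpos'
      have hpos : 0 < P {ω' | τ ω' ≤ t₀ - 1 / (n + 1) ∧ t₀ ≤ σ ω'} :=
        pos_iff_ne_zero.2 hpos'
      have h1n : (0:ℝ) < 1 / (n + 1) := by positivity
      obtain ⟨s, hs, hsδ, hst₀, hfs⟩ := L _ hpos (1 / (n + 1)) h1n
      have hsub : {ω' | τ ω' ≤ t₀ - 1 / (n + 1) ∧ t₀ ≤ σ ω'} ⊆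
          {ω' | τ ω' ≤ s ∧ s < σ ω'} := by
        rintro ω' ⟨h1, h2⟩
        exact ⟨le_of_lt (lt_of_le_of_lt h1 hsδ), lt_of_lt_of_le hst₀ h2⟩
      exact absurd (lt_of_le_of_lt (measure_mono hsub) hfs) (lt_irrefl _)
    obtain ⟨q, hq1, hq2⟩ := exists_rat_btwn hat₀'
    exact hbL q ⟨t₀, hgt₀, hq2, hq1, ht₀b⟩

/-- For nonnegative random times `τ ≤ σ` (a.s.), the supremum over `t ∈ [0,∞)`
of `1_{τ ≤ t < σ} / P(τ ≤ t < σ)` is almost surely finite (with the `ℝ≥0∞` convention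
`0/0 = 0`). -/
theorem stmt0 {Ω : Type*} [MeasurableSpace Ω] (P : Measure Ω) [IsProbabilityMeasure P]
    (τ σ : Ω → ℝ) (hτ : Measurable τ) (hσ : Measurable σ)
    (hτ0 : ∀ᵐ ω ∂P, 0 ≤ τ ω) (hle : ∀ᵐ ω ∂P, τ ω ≤ σ ω) :
    ∀ᵐ ω ∂P, (⨆ t ∈ Ici (0:ℝ),
      ({ω' | τ ω' ≤ t ∧ t < σ ω'}.indicator (fun _ => (1 : ℝ≥0∞)) ω)
        / P {ω' | τ ω' ≤ t ∧ t < σ ω'}) < ⊤ := by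
  have haeR : ∀ᵐ ω ∂P, ∀ q : ℚ, ¬ (∃ t, P {ω' | τ ω' ≤ t ∧ t < σ ω'} = 0 ∧
      τ ω ≤ t ∧ t < (q:ℝ) ∧ (q:ℝ) < σ ω) := by
    rw [MeasureTheory.ae_all_iff]
    intro q
    exact measure_eq_zero_iff_ae_notMem.1 (aux_right P τ σ q)
  have haeL : ∀ᵐ ω ∂P, ∀ q : ℚ, ¬ (∃ t, P {ω' | τ ω' < t ∧ t ≤ σ ω'} = 0 ∧
      (q:ℝ) < t ∧ τ ω < (q:ℝ) ∧ t ≤ σ ω) := by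
    rw [MeasureTheory.ae_all_iff]
    intro q
    exact measure_eq_zero_iff_ae_notMem.1 (aux_left P τ σ q)
  filter_upwards [haeR, haeL] with ω hbR hbL
  obtain ⟨c, hc, hcle⟩ := aux_pointwise P τ σ ω hbR hbL
  refine lt_of_le_of_lt (iSup₂_le fun t _ => ?_)
    (ENNReal.div_lt_top ENNReal.one_ne_top hc.ne')
  by_cases hmem : ω ∈ {ω' | τ ω' ≤ t ∧ t < σ ω'}
  · rw [Set.indicator_of_mem hmem]
    exact ENNReal.div_le_div_left (hcle t hmem.1 hmem.2) 1
  · rw [Set.indicator_of_notMem hmem, ENNReal.zero_div]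
    exact zero_le
end

section
/- Let ξ be an integrable random variable, A an event with P(A) possibly zero, and 𝒢 a sub-σ-algebra such that A ∈ 𝒢 and the trace σ-algebras satisfy ℋ ∩ A = 𝒢 ∩ A for some sub-σ-algebra ℋ. Then almost surely 1_A · E[ξ | 𝒢] = 1_A · E[ξ 1_A | ℋ] / E[1_A | ℋ], under the convention 0/0 := 0. -/
open MeasureTheory Set

/-- If every `mH`-measurable set agrees with some `mG`-measurable set on `A`, and `A ∈ mG`,
then `A.indicator φ` is `mG`-measurable for any `mH`-measurable `φ`. -/
lemma indicator_measurable_of_trace {Ω : Type*} {mG mH : MeasurableSpace Ω} {A : Set Ω}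
    (hA : MeasurableSet[mG] A)
    (h1 : ∀ H : Set Ω, MeasurableSet[mH] H → ∃ G : Set Ω, MeasurableSet[mG] G ∧ H ∩ A = G ∩ A)
    {φ : Ω → ℝ} (hφ : Measurable[mH] φ) : Measurable[mG] (A.indicator φ) := by
  intro B hB
  rw [Set.indicator_preimage]
  apply MeasurableSet.union
  · obtain ⟨G, hG, hGA⟩ := h1 (φ ⁻¹' B) (hφ hB)
    rw [hGA]
    exact hG.inter hA
  · refine MeasurableSet.diff ?_ hA
    by_cases h0 : (0:ℝ) ∈ B
    · have h : ((0 : Ω → ℝ) ⁻¹' B) = Set.univ := by ext ω; simp [h0]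
      rw [h]; exact @MeasurableSet.univ _ mG
    · have h : ((0 : Ω → ℝ) ⁻¹' B) = ∅ := by ext ω; simp [h0]
      rw [h]; exact @MeasurableSet.empty _ mG

/-- If `A ∈ 𝒢` and the traces of `ℋ` and `𝒢` on `A` coincide, then
almost surely `1_A · E[ξ | 𝒢] = 1_A · E[ξ 1_A | ℋ] / E[1_A | ℋ]`
(with the convention `0/0 := 0`, which is Lean's real division convention). -/
theorem stmt1 {Ω : Type*} {m0 : MeasurableSpace Ω} (P : Measure Ω) [IsProbabilityMeasure P]
    (mG mH : MeasurableSpace Ω) (hGle : mG ≤ m0) (hHle : mH ≤ m0)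
    (ξ : Ω → ℝ) (hξ : Integrable ξ P)
    (A : Set Ω) (hA : MeasurableSet[mG] A)
    (h1 : ∀ H : Set Ω, MeasurableSet[mH] H → ∃ G : Set Ω, MeasurableSet[mG] G ∧ H ∩ A = G ∩ A)
    (h2 : ∀ G : Set Ω, MeasurableSet[mG] G → ∃ H : Set Ω, MeasurableSet[mH] H ∧ G ∩ A = H ∩ A) :
    ∀ᵐ ω ∂P, A.indicator (fun _ => (1:ℝ)) ω * (P[ξ|mG]) ω
      = A.indicator (fun _ => (1:ℝ)) ω *
        ((P[A.indicator ξ|mH]) ω / (P[A.indicator (fun _ => (1:ℝ))|mH]) ω) := by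
  letI : MeasurableSpace Ω := m0
  have hA0 : MeasurableSet[m0] A := hGle A hA
  set ind : Ω → ℝ := A.indicator (fun _ => (1:ℝ)) with hind_def
  set f : Ω → ℝ := P[A.indicator ξ|mH] with hf_def
  set g : Ω → ℝ := P[ind|mH] with hg_def
  set Y : Ω → ℝ := P[ξ|mG] with hY_def
  set Z : Ω → ℝ := P[A.indicator ξ|mG] with hZ_def
  have hind_int : Integrable ind P := (integrable_const (μ := P) (1:ℝ)).indicator hA0
  have hAξ_int : Integrable (A.indicator ξ) P := hξ.indicator hA0
  have hfm : StronglyMeasurable[mH] f := stronglyMeasurable_condExp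
  have hgm : StronglyMeasurable[mH] g := stronglyMeasurable_condExp
  have hZm : StronglyMeasurable[mG] Z := stronglyMeasurable_condExp
  have hf_int : Integrable f P := integrable_condExp
  have hg_int : Integrable g P := integrable_condExp
  have hZ_int : Integrable Z P := integrable_condExp
  -- g is between 0 and 1 a.e.
  have hg0 : 0 ≤ᵐ[P] g :=
    condExp_nonneg (Filter.Eventually.of_forall fun ω =>
      Set.indicator_nonneg (fun _ _ => zero_le_one) ω)
  have hg1 : g ≤ᵐ[P] fun _ => (1:ℝ) := by
    have h := condExp_mono (μ := P) (m := mH) hind_int (integrable_const (μ := P) (1:ℝ))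
      (Filter.Eventually.of_forall fun ω => Set.indicator_le_self' (fun _ _ => zero_le_one) ω)
    calc g ≤ᵐ[P] P[(fun _ => (1:ℝ))|mH] := h
    _ =ᵐ[P] fun _ => (1:ℝ) := by rw [condExp_const hHle (1:ℝ)]
  have hg_bound : ∀ᵐ ω ∂P, ‖g ω‖ ≤ 1 := by
    filter_upwards [hg0, hg1] with ω h0 h1'
    rw [Real.norm_eq_abs, abs_of_nonneg h0]; exact h1'
  -- a.e. on A, g ≠ 0
  have hb : ∀ᵐ ω ∂P, ω ∈ A → g ω ≠ 0 := by
    have hs : MeasurableSet[mH] {ω | g ω = 0} := hgm.measurable (measurableSet_singleton 0)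
    have hint : ∫ ω in {ω | g ω = 0}, ind ω ∂P = ∫ ω in {ω | g ω = 0}, g ω ∂P :=
      (setIntegral_condExp hHle hind_int hs).symm
    have hz : ∫ ω in {ω | g ω = 0}, g ω ∂P = 0 := by
      apply integral_eq_zero_of_ae
      rw [Filter.EventuallyEq, ae_restrict_iff' (hHle _ hs)]
      exact Filter.Eventually.of_forall fun ω hω => hω
    have hPA : P (A ∩ {ω | g ω = 0}) = 0 := by
      have heq : ∫ ω in {ω | g ω = 0}, ind ω ∂P = (P ({ω | g ω = 0} ∩ A)).toReal := by
        rw [hind_def, setIntegral_indicator (μ := P) hA0]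
        simp [Measure.restrict_apply, measureReal_def]
      rw [hint, hz] at heq
      have hne : P ({ω | g ω = 0} ∩ A) ≠ ⊤ := measure_ne_top _ _
      rw [Set.inter_comm]
      exact ((ENNReal.toReal_eq_zero_iff _).mp heq.symm).resolve_right hne
    rw [ae_iff]
    refine measure_mono_null ?_ hPA
    intro ω hω
    push_neg at hω
    exact ⟨hω.1, hω.2⟩
  -- measurability transfers
  have hAg_m : StronglyMeasurable[mG] (A.indicator g) :=
    (indicator_measurable_of_trace hA h1 hgm.measurable).stronglyMeasurable
  have hAf_m : StronglyMeasurable[mG] (A.indicator f) :=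
    (indicator_measurable_of_trace hA h1 hfm.measurable).stronglyMeasurable
  have hAf_int : Integrable (A.indicator f) P := hf_int.indicator hA0
  -- integrability of products
  have hgAξ_int : Integrable (g * A.indicator ξ) P :=
    hAξ_int.bdd_mul ((hgm.mono hHle).aestronglyMeasurable) hg_bound
  have hAg_bound : ∀ᵐ ω ∂P, ‖A.indicator g ω‖ ≤ 1 := by
    filter_upwards [hg_bound] with ω hω
    exact le_trans (norm_indicator_le_norm_self g ω) hω
  have hAgAξ_int : Integrable (A.indicator g * A.indicator ξ) P :=
    hAξ_int.bdd_mul ((hAg_m.mono hGle).aestronglyMeasurable) hAg_bound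
  have hAgZ_int : Integrable (A.indicator g * Z) P :=
    hZ_int.bdd_mul ((hAg_m.mono hGle).aestronglyMeasurable) hAg_bound
  have hfind : A.indicator f = f * ind := by
    ext ω; by_cases hω : ω ∈ A <;> simp [hind_def, Set.indicator_of_mem,
      Set.indicator_of_notMem, hω]
  have hfind_int : Integrable (f * ind) P := hfind ▸ hAf_int
  -- pull-out properties
  have hpullH1 : P[g * A.indicator ξ|mH] =ᵐ[P] g * f :=
    condExp_mul_of_stronglyMeasurable_left hgm hgAξ_int hAξ_int
  have hpullH2 : P[f * ind|mH] =ᵐ[P] f * g :=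
    condExp_mul_of_stronglyMeasurable_left hfm hfind_int hind_int
  have hpullG : P[A.indicator g * A.indicator ξ|mG] =ᵐ[P] A.indicator g * Z :=
    condExp_mul_of_stronglyMeasurable_left hAg_m hAgAξ_int hAξ_int
  -- integral identity over mH-sets
  have key_H : ∀ H : Set Ω, MeasurableSet[mH] H →
      ∫ ω in H, (g * A.indicator ξ) ω ∂P = ∫ ω in H, A.indicator f ω ∂P := by
    intro H hH
    calc ∫ ω in H, (g * A.indicator ξ) ω ∂P
        = ∫ ω in H, (P[g * A.indicator ξ|mH]) ω ∂P :=
          (setIntegral_condExp hHle hgAξ_int hH).symm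
      _ = ∫ ω in H, (g * f) ω ∂P := integral_congr_ae (ae_restrict_of_ae hpullH1)
      _ = ∫ ω in H, (f * g) ω ∂P := by simp_rw [Pi.mul_apply, mul_comm]
      _ = ∫ ω in H, (P[f * ind|mH]) ω ∂P :=
          (integral_congr_ae (ae_restrict_of_ae hpullH2)).symm
      _ = ∫ ω in H, (f * ind) ω ∂P := setIntegral_condExp hHle hfind_int hH
      _ = ∫ ω in H, A.indicator f ω ∂P := by rw [hfind]
  -- integral identity over mG-sets
  have key_G : ∀ G : Set Ω, MeasurableSet[mG] G →
      ∫ ω in G, (A.indicator g * Z) ω ∂P = ∫ ω in G, A.indicator f ω ∂P := by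
    intro G hG
    obtain ⟨H, hH, hGA⟩ := h2 G hG
    have hprod : (A.indicator g * A.indicator ξ) = A.indicator (fun ω => g ω * ξ ω) := by
      ext ω; by_cases hω : ω ∈ A <;> simp [Set.indicator_of_mem, Set.indicator_of_notMem, hω]
    have hprod2 : (g * A.indicator ξ) = A.indicator (fun ω => g ω * ξ ω) := by
      ext ω; by_cases hω : ω ∈ A <;> simp [Set.indicator_of_mem, Set.indicator_of_notMem, hω]
    calc ∫ ω in G, (A.indicator g * Z) ω ∂P
        = ∫ ω in G, (P[A.indicator g * A.indicator ξ|mG]) ω ∂P :=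
          (integral_congr_ae (ae_restrict_of_ae hpullG)).symm
      _ = ∫ ω in G, (A.indicator g * A.indicator ξ) ω ∂P :=
          setIntegral_condExp hGle hAgAξ_int hG
      _ = ∫ ω in G, A.indicator (fun ω => g ω * ξ ω) ω ∂P := by rw [hprod]
      _ = ∫ ω in G ∩ A, g ω * ξ ω ∂P := setIntegral_indicator (μ := P) hA0
      _ = ∫ ω in H ∩ A, g ω * ξ ω ∂P := by rw [hGA]
      _ = ∫ ω in H, A.indicator (fun ω => g ω * ξ ω) ω ∂P := (setIntegral_indicator (μ := P) hA0).symm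
      _ = ∫ ω in H, (g * A.indicator ξ) ω ∂P := by rw [hprod2]
      _ = ∫ ω in H, A.indicator f ω ∂P := key_H H hH
      _ = ∫ ω in H ∩ A, f ω ∂P := setIntegral_indicator (μ := P) hA0
      _ = ∫ ω in G ∩ A, f ω ∂P := by rw [hGA]
      _ = ∫ ω in G, A.indicator f ω ∂P := (setIntegral_indicator (μ := P) hA0).symm
  -- the main identity: 1_A g Z = 1_A f a.e.
  have hmain : (A.indicator g * Z) =ᵐ[P] A.indicator f := by
    have h1' : (A.indicator g * Z) =ᵐ[P] P[A.indicator f|mG] :=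
      ae_eq_condExp_of_forall_setIntegral_eq hGle hAf_int
        (fun s _ _ => hAgZ_int.integrableOn)
        (fun s hs _ => key_G s hs)
        ((hAg_m.mul hZm).aestronglyMeasurable)
    have h2' : P[A.indicator f|mG] = A.indicator f :=
      condExp_of_stronglyMeasurable hGle hAf_m hAf_int
    rw [h2'] at h1'
    exact h1'
  have hc : Z =ᵐ[P] A.indicator Y := condExp_indicator hξ hA
  -- conclude pointwise
  filter_upwards [hmain, hc, hb] with ω hm' hc' hb'
  by_cases hω : ω ∈ A
  · have hind1 : ind ω = 1 := Set.indicator_of_mem hω _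
    rw [hind1, one_mul, one_mul]
    have hgY : g ω * Y ω = f ω := by
      have := hm'
      simp only [Pi.mul_apply] at this
      rw [Set.indicator_of_mem hω, Set.indicator_of_mem hω] at this
      rw [← this, hc', Set.indicator_of_mem hω]
    rw [← hgY]
    exact (mul_div_cancel_left₀ (Y ω) (hb' hω)).symm
  · have hind0 : ind ω = 0 := Set.indicator_of_notMem hω _
    rw [hind0, zero_mul, zero_mul]
end

section
/- If a sub-σ-algebra ℋ and a σ-algebra 𝒢 have equal traces on an event A ∈ 𝒢, i.e., ℋ ∩ A = 𝒢 ∩ A, and E[1_A | ℋ] > 0 on A almost surely, then the random variable 1_A · E[ξ 1_A | ℋ]/E[1_A | ℋ] is a version of 1_A · E[ξ | 𝒢] for every integrable ξ; in particular E[1_G 1_A ξ] = E[1_G 1_A E[ξ 1_A | ℋ]/E[1_A | ℋ]] for all G ∈ 𝒢. -/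
open MeasureTheory Set

/-- If the traces of `ℋ` and `𝒢` on `A ∈ 𝒢` coincide and `E[1_A|ℋ] > 0` on `A`
a.s., then `1_A · E[ξ1_A|ℋ]/E[1_A|ℋ]` is a version of `1_A · E[ξ|𝒢]`; in particular
`E[1_G 1_A ξ] = E[1_G 1_A E[ξ1_A|ℋ]/E[1_A|ℋ]]` for all `G ∈ 𝒢`. -/
theorem stmt2 {Ω : Type*} {m0 : MeasurableSpace Ω} (P : Measure Ω) [IsProbabilityMeasure P]
    (mG mH : MeasurableSpace Ω) (hGle : mG ≤ m0) (hHle : mH ≤ m0)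
    (ξ : Ω → ℝ) (hξ : Integrable ξ P)
    (A : Set Ω) (hA : MeasurableSet[mG] A)
    (h1 : ∀ H : Set Ω, MeasurableSet[mH] H → ∃ G : Set Ω, MeasurableSet[mG] G ∧ H ∩ A = G ∩ A)
    (h2 : ∀ G : Set Ω, MeasurableSet[mG] G → ∃ H : Set Ω, MeasurableSet[mH] H ∧ G ∩ A = H ∩ A)
    (hpos : ∀ᵐ ω ∂P, ω ∈ A → 0 < (P[A.indicator (fun _ => (1:ℝ))|mH]) ω) :
    (∀ᵐ ω ∂P, A.indicator (fun _ => (1:ℝ)) ω *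
        ((P[A.indicator ξ|mH]) ω / (P[A.indicator (fun _ => (1:ℝ))|mH]) ω)
      = A.indicator (fun _ => (1:ℝ)) ω * (P[ξ|mG]) ω) ∧
    (∀ G : Set Ω, MeasurableSet[mG] G →
      ∫ ω, G.indicator (fun _ => (1:ℝ)) ω * A.indicator (fun _ => (1:ℝ)) ω * ξ ω ∂P
        = ∫ ω, G.indicator (fun _ => (1:ℝ)) ω * A.indicator (fun _ => (1:ℝ)) ω *
            ((P[A.indicator ξ|mH]) ω / (P[A.indicator (fun _ => (1:ℝ))|mH]) ω) ∂P) := by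
  letI : MeasurableSpace Ω := m0
  have hAm0 : MeasurableSet[m0] A := hGle A hA
  set c : Ω → ℝ := A.indicator (fun _ => (1:ℝ)) with hc_def
  set g : Ω → ℝ := P[c|mH] with hg_def
  set f : Ω → ℝ := P[A.indicator ξ|mH] with hf_def
  set h : Ω → ℝ := fun ω => f ω / g ω with hh_def
  have hgm : Measurable[mH] g := stronglyMeasurable_condExp.measurable
  have hfm : Measurable[mH] f := stronglyMeasurable_condExp.measurable
  have hhm : Measurable[mH] h := hfm.div hgm
  have hhm0 : Measurable[m0] h := fun s hs => hHle _ (hhm hs)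
  have hc_meas0 : Measurable[m0] c := by
    have : Measurable[m0] (fun _ : Ω => (1:ℝ)) := measurable_const
    exact this.indicator hAm0
  have hg_meas0 : Measurable[m0] g := fun s hs => hHle _ (hgm hs)
  have hint_c : Integrable c P := (integrable_const (1:ℝ)).indicator hAm0
  have hint_Aξ : Integrable (A.indicator ξ) P := hξ.indicator hAm0
  have hint_f : Integrable f P := integrable_condExp
  have hint_g : Integrable g P := integrable_condExp
  -- c is {0,1}-valued
  have hc01 : ∀ ω, c ω = 0 ∨ c ω = 1 := by
    intro ω
    by_cases hω : ω ∈ A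
    · exact Or.inr (Set.indicator_of_mem hω _)
    · exact Or.inl (Set.indicator_of_notMem hω _)
  have hc_nonneg : ∀ ω, 0 ≤ c ω := fun ω => by
    rcases hc01 ω with h' | h' <;> simp [h']
  have hc_le_one : ∀ ω, c ω ≤ 1 := fun ω => by
    rcases hc01 ω with h' | h' <;> simp [h']
  -- g is nonnegative a.e.
  have hg_nonneg : 0 ≤ᵐ[P] g :=
    condExp_nonneg (ae_of_all _ fun ω => by
      rcases hc01 ω with h' | h' <;> simp [h'])
  -- f = 0 a.e. on {g = 0}
  have hs_meas : MeasurableSet[mH] {ω | g ω = 0} := hgm (measurableSet_singleton 0)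
  have hind0 : ({ω | g ω = 0}).indicator (A.indicator ξ) =ᵐ[P] 0 := by
    filter_upwards [hpos] with ω hω
    by_cases hωA : ω ∈ A
    · have hgpos := hω hωA
      have hns : ω ∉ {ω | g ω = 0} := by simp [Set.mem_setOf_eq, hgpos.ne']
      simp [Set.indicator_of_notMem hns]
    · by_cases hωs : ω ∈ {ω | g ω = 0}
      · simp [Set.indicator_of_mem hωs, Set.indicator_of_notMem hωA]
      · simp [Set.indicator_of_notMem hωs]
  have hf0 : ∀ᵐ ω ∂P, g ω = 0 → f ω = 0 := by
    have e1 := condExp_indicator (m := mH) hint_Aξ hs_meas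
    have e2 : P[({ω | g ω = 0}).indicator (A.indicator ξ)|mH] =ᵐ[P] 0 :=
      (condExp_congr_ae hind0).trans (by rw [condExp_zero])
    filter_upwards [e1.symm.trans e2] with ω hω hgω
    have hmem : ω ∈ {ω | g ω = 0} := hgω
    simpa [Set.indicator_of_mem hmem] using hω
  -- h * g = f a.e.
  have hhg : (fun ω => h ω * g ω) =ᵐ[P] f := by
    filter_upwards [hf0] with ω hω
    by_cases hgω : g ω = 0
    · simp [hh_def, hgω, hω hgω]
    · simp only [hh_def]
      field_simp
  -- Z := A.indicator h is mG-measurable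
  have hZ_meas : Measurable[mG] (A.indicator h) := by
    intro s hs
    rw [Set.indicator_preimage, Set.ite]
    obtain ⟨G, hG, hGA⟩ := h1 (h ⁻¹' s) (hhm hs)
    rw [hGA]
    have hconst : MeasurableSet[mG] ((0 : Ω → ℝ) ⁻¹' s) := by
      by_cases h0 : (0:ℝ) ∈ s
      · have : (0 : Ω → ℝ) ⁻¹' s = Set.univ := by
          ext ω; simp [h0]
        rw [this]; exact @MeasurableSet.univ Ω mG
      · have : (0 : Ω → ℝ) ⁻¹' s = ∅ := by
          ext ω; simp [h0]
        rw [this]; exact @MeasurableSet.empty Ω mG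
    exact (hG.inter hA).union (hconst.diff hA)
  have hZ_meas0 : Measurable[m0] (A.indicator h) := fun s hs => hGle _ (hZ_meas hs)
  -- Integrability of Z via truncation
  have habsH : Measurable[mH] (fun ω => |h ω|) := @Measurable.abs ℝ Ω _ _ _ mH h _ _ hhm
  have hv_meas : ∀ n : ℕ, StronglyMeasurable[mH] (fun ω => min |h ω| (n:ℝ)) := fun n => by
    have hm : Measurable[mH] (fun ω => min |h ω| (n:ℝ)) :=
      habsH.min (@measurable_const ℝ Ω _ mH _)
    exact hm.stronglyMeasurable
  have hv_nonneg : ∀ (n : ℕ) (ω : Ω), 0 ≤ min |h ω| (n:ℝ) := fun n ω =>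
    le_min (abs_nonneg _) (Nat.cast_nonneg n)
  have hvA_int : ∀ n : ℕ, Integrable (fun ω => min |h ω| (n:ℝ) * c ω) P := by
    intro n
    have hm' : AEStronglyMeasurable (fun ω => min |h ω| (n:ℝ) * c ω) P :=
      ((hhm0.abs.min measurable_const).mul hc_meas0).aestronglyMeasurable
    refine Integrable.mono' (integrable_const (n:ℝ)) hm' (ae_of_all _ fun ω => ?_)
    have h1' : min |h ω| (n:ℝ) ≤ (n:ℝ) := min_le_right _ _
    have h2' : 0 ≤ min |h ω| (n:ℝ) * c ω := mul_nonneg (hv_nonneg n ω) (hc_nonneg ω)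
    rw [Real.norm_eq_abs, abs_of_nonneg h2']
    calc min |h ω| (n:ℝ) * c ω ≤ min |h ω| (n:ℝ) * 1 :=
          mul_le_mul_of_nonneg_left (hc_le_one ω) (hv_nonneg n ω)
      _ = min |h ω| (n:ℝ) := mul_one _
      _ ≤ (n:ℝ) := h1'
  have key_n : ∀ n : ℕ, ∫ ω, min |h ω| (n:ℝ) * c ω ∂P ≤ ∫ ω, |f ω| ∂P := by
    intro n
    have hpull :
        P[(fun ω => min |h ω| (n:ℝ)) * c|mH] =ᵐ[P] (fun ω => min |h ω| (n:ℝ)) * g :=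
      condExp_mul_of_stronglyMeasurable_left (hv_meas n) (hvA_int n) hint_c
    have hint_vg : Integrable (fun ω => min |h ω| (n:ℝ) * g ω) P := by
      refine Integrable.mono' (hint_g.norm.const_mul (n:ℝ))
        (((hhm0.abs.min measurable_const).mul hg_meas0).aestronglyMeasurable)
        (ae_of_all _ fun ω => ?_)
      rw [Real.norm_eq_abs, abs_mul, Real.norm_eq_abs]
      exact mul_le_mul_of_nonneg_right
        (by rw [abs_of_nonneg (hv_nonneg n ω)]; exact min_le_right _ _) (abs_nonneg _)
    calc ∫ ω, min |h ω| (n:ℝ) * c ω ∂P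
        = ∫ ω, (P[(fun ω => min |h ω| (n:ℝ)) * c|mH]) ω ∂P :=
          (integral_condExp hHle).symm
      _ = ∫ ω, min |h ω| (n:ℝ) * g ω ∂P := integral_congr_ae hpull
      _ ≤ ∫ ω, |f ω| ∂P := by
          refine integral_mono_ae hint_vg hint_f.abs ?_
          filter_upwards [hg_nonneg, hhg] with ω hgω hhgω
          calc min |h ω| (n:ℝ) * g ω ≤ |h ω| * g ω :=
                mul_le_mul_of_nonneg_right (min_le_left _ _) hgω
            _ = |h ω * g ω| := by rw [abs_mul, abs_of_nonneg hgω]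
            _ = |f ω| := by rw [hhgω]
  have hZ_int : Integrable (A.indicator h) P := by
    refine ⟨hZ_meas0.aestronglyMeasurable, ?_⟩
    rw [hasFiniteIntegral_iff_norm]
    have heq : ∀ ω, ENNReal.ofReal ‖A.indicator h ω‖
        = ⨆ n : ℕ, ENNReal.ofReal (min |h ω| (n:ℝ) * c ω) := by
      intro ω
      by_cases hω : ω ∈ A
      · have hcω : c ω = 1 := Set.indicator_of_mem hω _
        rw [Set.indicator_of_mem hω, Real.norm_eq_abs]
        simp only [hcω, mul_one]
        refine le_antisymm ?_ (iSup_le fun n =>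
          ENNReal.ofReal_le_ofReal (min_le_left _ _))
        refine le_iSup_of_le ⌈|h ω|⌉₊ ?_
        rw [min_eq_left (Nat.le_ceil _)]
      · have hcω : c ω = 0 := Set.indicator_of_notMem hω _
        rw [Set.indicator_of_notMem hω]
        simp [hcω]
    calc ∫⁻ ω, ENNReal.ofReal ‖A.indicator h ω‖ ∂P
        = ∫⁻ ω, ⨆ n : ℕ, ENNReal.ofReal (min |h ω| (n:ℝ) * c ω) ∂P := by
          exact lintegral_congr heq
      _ = ⨆ n : ℕ, ∫⁻ ω, ENNReal.ofReal (min |h ω| (n:ℝ) * c ω) ∂P := by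
          refine lintegral_iSup (fun n => ?_) (fun n m hnm ω => ?_)
          · exact ((hhm0.abs.min measurable_const).mul hc_meas0).ennreal_ofReal
          · refine ENNReal.ofReal_le_ofReal ?_
            refine mul_le_mul_of_nonneg_right ?_ (hc_nonneg ω)
            exact min_le_min le_rfl (Nat.cast_le.mpr hnm)
      _ ≤ ENNReal.ofReal (∫ ω, |f ω| ∂P) := by
          refine iSup_le fun n => ?_
          rw [← ofReal_integral_eq_lintegral_ofReal (hvA_int n)
            (ae_of_all _ fun ω => mul_nonneg (hv_nonneg n ω) (hc_nonneg ω))]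
          exact ENNReal.ofReal_le_ofReal (key_n n)
      _ < ⊤ := ENNReal.ofReal_lt_top
  -- set-integral identity on mG-sets
  have hset : ∀ s : Set Ω, MeasurableSet[mG] s →
      ∫ ω in s, A.indicator h ω ∂P = ∫ ω in s, A.indicator ξ ω ∂P := by
    intro s hs
    obtain ⟨H, hH, hHA⟩ := h2 s hs
    have hHm0 : MeasurableSet[m0] H := hHle H hH
    have hprod_eq : H.indicator (A.indicator h) = fun ω => H.indicator h ω * c ω := by
      funext ω
      by_cases hωH : ω ∈ H
      · by_cases hωA : ω ∈ A
        · simp [hc_def, Set.indicator_apply, hωH, hωA]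
        · simp [hc_def, Set.indicator_apply, hωH, hωA]
      · simp [hc_def, Set.indicator_apply, hωH]
    have hint_Hh : Integrable (fun ω => H.indicator h ω * c ω) P := by
      rw [← hprod_eq]
      exact hZ_int.indicator hHm0
    have hpull : P[H.indicator h * c|mH] =ᵐ[P] H.indicator h * g :=
      condExp_mul_of_stronglyMeasurable_left ((hhm.indicator hH).stronglyMeasurable)
        hint_Hh hint_c
    have hHg : (fun ω => H.indicator h ω * g ω) =ᵐ[P] H.indicator f := by
      filter_upwards [hhg] with ω hω
      by_cases hωH : ω ∈ H
      · simp [Set.indicator_of_mem hωH, hω]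
      · simp [hc_def, Set.indicator_apply, hωH]
    have hint_Hg : Integrable (fun ω => H.indicator h ω * g ω) P :=
      (hint_f.indicator hHm0).congr hHg.symm
    calc ∫ ω in s, A.indicator h ω ∂P
        = ∫ ω in s ∩ A, h ω ∂P := setIntegral_indicator hAm0
      _ = ∫ ω in H ∩ A, h ω ∂P := by rw [hHA]
      _ = ∫ ω in H, A.indicator h ω ∂P := (setIntegral_indicator hAm0).symm
      _ = ∫ ω, H.indicator (A.indicator h) ω ∂P := (integral_indicator hHm0).symm
      _ = ∫ ω, H.indicator h ω * c ω ∂P := by rw [hprod_eq]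
      _ = ∫ ω, (P[H.indicator h * c|mH]) ω ∂P := (integral_condExp hHle).symm
      _ = ∫ ω, H.indicator h ω * g ω ∂P := integral_congr_ae hpull
      _ = ∫ ω, H.indicator f ω ∂P := integral_congr_ae hHg
      _ = ∫ ω in H, f ω ∂P := integral_indicator hHm0
      _ = ∫ ω in H, A.indicator ξ ω ∂P := setIntegral_condExp hHle hint_Aξ hH
      _ = ∫ ω in H ∩ A, ξ ω ∂P := setIntegral_indicator hAm0
      _ = ∫ ω in s ∩ A, ξ ω ∂P := by rw [hHA]
      _ = ∫ ω in s, A.indicator ξ ω ∂P := (setIntegral_indicator hAm0).symm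
  -- Z is a version of E[1_A ξ | mG]
  have hkey : A.indicator h =ᵐ[P] P[A.indicator ξ|mG] := by
    refine ae_eq_condExp_of_forall_setIntegral_eq hGle hint_Aξ
      (fun s _ _ => hZ_int.integrableOn) (fun s hs _ => hset s hs)
      ((hZ_meas.stronglyMeasurable).aestronglyMeasurable)
  constructor
  · have hind := condExp_indicator (m := mG) hξ hA
    filter_upwards [hkey.trans hind] with ω hω
    by_cases hωA : ω ∈ A
    · have hcω : c ω = 1 := Set.indicator_of_mem hωA _
      have : h ω = (P[ξ|mG]) ω := by
        have := hω
        rwa [Set.indicator_of_mem hωA, Set.indicator_of_mem hωA] at this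
      simp only [hcω, one_mul]
      exact this
    · have hcω : c ω = 0 := Set.indicator_of_notMem hωA _
      simp [hcω]
  · intro G hG
    have hGm0 : MeasurableSet[m0] G := hGle G hG
    have hL : (fun ω => G.indicator (fun _ => (1:ℝ)) ω * c ω * ξ ω)
        = G.indicator (A.indicator ξ) := by
      funext ω
      by_cases hωG : ω ∈ G
      · by_cases hωA : ω ∈ A
        · simp [hc_def, Set.indicator_apply, hωG, hωA]
        · simp [hc_def, Set.indicator_apply, hωG, hωA]
      · simp [hc_def, Set.indicator_apply, hωG]
    have hR : (fun ω => G.indicator (fun _ => (1:ℝ)) ω * c ω * h ω)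
        = G.indicator (A.indicator h) := by
      funext ω
      by_cases hωG : ω ∈ G
      · by_cases hωA : ω ∈ A
        · simp [hc_def, Set.indicator_apply, hωG, hωA]
        · simp [hc_def, Set.indicator_apply, hωG, hωA]
      · simp [hc_def, Set.indicator_apply, hωG]
    have hRL : (fun ω => G.indicator (fun _ => (1:ℝ)) ω * c ω * (f ω / g ω))
        = fun ω => G.indicator (fun _ => (1:ℝ)) ω * c ω * h ω := by
      funext ω; rw [hh_def]
    calc ∫ ω, G.indicator (fun _ => (1:ℝ)) ω * c ω * ξ ω ∂P
        = ∫ ω, G.indicator (A.indicator ξ) ω ∂P := by rw [hL]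
      _ = ∫ ω in G, A.indicator ξ ω ∂P := integral_indicator hGm0
      _ = ∫ ω in G, A.indicator h ω ∂P := (hset G hG).symm
      _ = ∫ ω, G.indicator (A.indicator h) ω ∂P := (integral_indicator hGm0).symm
      _ = ∫ ω, G.indicator (fun _ => (1:ℝ)) ω * c ω * h ω ∂P := by rw [hR]
      _ = ∫ ω, G.indicator (fun _ => (1:ℝ)) ω * c ω * (f ω / g ω) ∂P := by rw [hRL]
end

section
/- Let (t,s) ↦ A_{(t,s)} = {(t',s'): t' ≤ t, s < s'} and let B ⊆ [0,∞)² be a union of such unbounded rectangles. Then any anti-diagonal line L_x = {(x,x) + λ(1,−1) : λ ∈ ℝ} intersects the topological boundary ∂B in at most one point. -/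
open Set

/-- If `B` is a union of unbounded rectangles
`A_{(t,s)} = {(t',s') : t' ≤ t, s < s'}` with indices `(t,s)`, `0 ≤ t < s`, then every
anti-diagonal line `L_x = {(x,x) + λ(1,−1)}` meets the topological boundary `∂B` in at most
one point. -/
theorem stmt15 (β : Set (ℝ × ℝ)) (hβ : ∀ p ∈ β, 0 ≤ p.1 ∧ p.1 < p.2)
    (B : Set (ℝ × ℝ)) (hB : B = ⋃ p ∈ β, {q : ℝ × ℝ | q.1 ≤ p.1 ∧ p.2 < q.2}) :
    ∀ x : ℝ, ({q : ℝ × ℝ | q.1 + q.2 = 2 * x} ∩ frontier B).Subsingleton := by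
  -- Key lemma: if r ∈ B and a is strictly left of and above r, then a ∈ interior B.
  have hint : ∀ r ∈ B, ∀ a : ℝ × ℝ, a.1 < r.1 → r.2 < a.2 → a ∈ interior B := by
    intro r hr a h1 h2
    rw [hB] at hr
    simp only [mem_iUnion, mem_setOf_eq] at hr
    obtain ⟨p, hp, hr1, hr2⟩ := hr
    refine mem_interior.2 ⟨{s : ℝ × ℝ | s.1 < r.1 ∧ r.2 < s.2}, ?_, ?_, ⟨h1, h2⟩⟩
    · intro s hs
      rw [hB]
      simp only [mem_iUnion, mem_setOf_eq]
      exact ⟨p, hp, le_of_lt (lt_of_lt_of_le hs.1 hr1), lt_trans hr2 hs.2⟩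
    · exact (isOpen_lt continuous_fst continuous_const).inter
        (isOpen_lt continuous_const continuous_snd)
  -- If a,b are on the same anti-diagonal, a.1 < b.1, b ∈ closure B, then a ∈ interior B.
  have key : ∀ x : ℝ, ∀ a b : ℝ × ℝ, a.1 + a.2 = 2 * x → b.1 + b.2 = 2 * x →
      a.1 < b.1 → b ∈ closure B → a ∈ interior B := by
    intro x a b ha hb hab hbc
    have h2 : b.2 < a.2 := by linarith
    set ε : ℝ := min (b.1 - a.1) (a.2 - b.2) with hε
    have hεpos : 0 < ε := lt_min (by linarith) (by linarith)
    obtain ⟨r, hrB, hrd⟩ := Metric.mem_closure_iff.1 hbc ε hεpos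
    have hd1 : dist b.1 r.1 < ε := lt_of_le_of_lt (le_max_left _ _) hrd
    have hd2 : dist b.2 r.2 < ε := lt_of_le_of_lt (le_max_right _ _) hrd
    rw [Real.dist_eq, abs_lt] at hd1 hd2
    have hε1 : ε ≤ b.1 - a.1 := min_le_left _ _
    have hε2 : ε ≤ a.2 - b.2 := min_le_right _ _
    exact hint r hrB a (by linarith [hd1.2]) (by linarith [hd2.2])
  intro x a ha b hb
  by_contra hne
  have hsum : a.1 + a.2 = 2 * x := ha.1
  have hsum' : b.1 + b.2 = 2 * x := hb.1
  rcases lt_trichotomy a.1 b.1 with h | h | h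
  · exact ha.2.2 (key x a b hsum hsum' h (frontier_subset_closure hb.2))
  · exact hne (Prod.ext h (by linarith))
  · exact hb.2.2 (key x b a hsum' hsum h (frontier_subset_closure ha.2))
end

section
/- Let ξ be integrable and suppose for each t the conditional expectation E[ξ | 𝒢_t] is represented on the event A^M_t as 𝕀^M_t · E_M[ξ 𝕀^M_t]/E_M[𝕀^M_t] (convention 0/0 := 0), where the events (A^M_t)_{M∈ℳ} partition Ω for each t, t ↦ 𝕀^M_t = 1_{A^M_t} is càdlàg, t ↦ E_M[ξ 𝕀^M_t] and t ↦ E_M[𝕀^M_t] are càdlàg (by dominated convergence), and sup_t 𝕀^M_t/E_M[𝕀^M_t] < ∞ a.s. Then the process Y_t := Σ_{M∈ℳ} 𝕀^M_t E_M[ξ 𝕀^M_t]/E_M[𝕀^M_t] is almost surely càdlàg and is the unique (up to evanescence) càdlàg modification of t ↦ E[ξ | 𝒢_t]. -/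
open MeasureTheory Set Filter Topology

lemma aux_binary_ev_one {f : ℝ → ℝ} {l : Filter ℝ}
    (hb : ∀ s, f s = 0 ∨ f s = 1) (h : Tendsto f l (𝓝 1)) : ∀ᶠ s in l, f s = 1 := by
  have := h.eventually (eventually_gt_nhds (by norm_num : (1:ℝ)/2 < 1))
  filter_upwards [this] with s hs
  rcases hb s with h0 | h1
  · rw [h0] at hs; norm_num at hs
  · exact h1

lemma aux_binary_ev_zero {f : ℝ → ℝ} {l : Filter ℝ}
    (hb : ∀ s, f s = 0 ∨ f s = 1) (h : Tendsto f l (𝓝 0)) : ∀ᶠ s in l, f s = 0 := by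
  have := h.eventually (eventually_lt_nhds (by norm_num : (0:ℝ) < 1/2))
  filter_upwards [this] with s hs
  rcases hb s with h0 | h1
  · exact h0
  · rw [h1] at hs; norm_num at hs

lemma aux_lim01 {f : ℝ → ℝ} {l : Filter ℝ} [l.NeBot] {L : ℝ}
    (hb : ∀ s, f s = 0 ∨ f s = 1) (h : Tendsto f l (𝓝 L)) : L = 0 ∨ L = 1 := by
  have hcl : IsClosed ({0,1} : Set ℝ) := ((Set.finite_singleton (1:ℝ)).insert 0).isClosed
  have hmem : L ∈ ({0,1} : Set ℝ) :=
    hcl.mem_of_tendsto h (Filter.Eventually.of_forall (fun s => by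
      rcases hb s with h0 | h0 <;> simp [h0]))
  simpa using hmem

lemma aux_hzero {I h : ℝ → ℝ} {C : ℝ} {l : Filter ℝ}
    (hC : ∀ s, I s / h s ≤ C) (hpos : ∀ s, 0 ≤ h s)
    (hI1 : ∀ᶠ s in l, I s = 1) (hh0 : Tendsto h l (𝓝 0)) :
    ∀ᶠ s in l, h s = 0 := by
  set C' : ℝ := max C 1 with hC'def
  have hC'pos : (0:ℝ) < C' := lt_of_lt_of_le one_pos (le_max_right _ _)
  have hsmall : ∀ᶠ s in l, h s < 1 / C' :=
    hh0.eventually (eventually_lt_nhds (by positivity))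
  filter_upwards [hI1, hsmall] with s h1 h2
  by_contra hne
  have hpos' : 0 < h s := lt_of_le_of_ne (hpos s) (Ne.symm hne)
  have h3 : 1 / h s ≤ C' := le_trans (by rw [← h1]; exact hC s) (le_max_left _ _)
  have h4 : (1:ℝ) ≤ C' * h s := (div_le_iff₀ hpos').mp h3
  have h5 : 1 / C' ≤ h s := by rw [div_le_iff₀ hC'pos, mul_comm]; exact h4
  linarith

lemma aux_ratseq (t : ℝ) : ∃ x : ℕ → ℝ, (∀ n, ∃ q : ℚ, (q:ℝ) = x n) ∧ (∀ n, t < x n) ∧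
    Tendsto x atTop (𝓝 t) := by
  have hex : ∀ n : ℕ, ∃ q : ℚ, t < (q:ℝ) ∧ (q:ℝ) < t + 1/(n+1) := fun n =>
    exists_rat_btwn (show t < t + 1/(n+1) by
      have h0 : (0:ℝ) < 1/(n+1) := by positivity
      linarith)
  choose q hq1 hq2 using hex
  refine ⟨fun n => (q n : ℝ), fun n => ⟨q n, rfl⟩, hq1, ?_⟩
  refine tendsto_of_tendsto_of_tendsto_of_le_of_le tendsto_const_nhds ?_
    (fun n => (hq1 n).le) (fun n => (hq2 n).le)
  have : Tendsto (fun n : ℕ => t + 1/((n:ℝ)+1)) atTop (𝓝 (t+0)) :=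
    tendsto_const_nhds.add tendsto_one_div_add_atTop_nhds_zero_nat
  simpa using this

/-- If `E[ξ|𝒢_t]` is represented on each event `A^M_t` as
`𝕀^M_t · E_M[ξ 𝕀^M_t]/E_M[𝕀^M_t]` (convention `0/0 := 0`), the `(A^M_t)_M` partition `Ω`
for each `t`, all of `t ↦ 𝕀^M_t`, `t ↦ E_M[ξ 𝕀^M_t]`, `t ↦ E_M[𝕀^M_t]` are càdlàg, and
`sup_t 𝕀^M_t/E_M[𝕀^M_t] < ∞` a.s., then `Y_t = Σ_M 𝕀^M_t E_M[ξ 𝕀^M_t]/E_M[𝕀^M_t]` is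
almost surely càdlàg and is the unique (up to evanescence) càdlàg modification of
`t ↦ E[ξ|𝒢_t]`. -/
theorem stmt19 {Ω : Type*} {m0 : MeasurableSpace Ω} (P : Measure Ω) [IsProbabilityMeasure P]
    (ξ : Ω → ℝ) (hξ : Integrable ξ P)
    (A : ℕ → ℝ → Set Ω) (hAmeas : ∀ M t, MeasurableSet (A M t))
    (hApart : ∀ t : ℝ, ∀ ω, ∃! M : ℕ, ω ∈ A M t)
    (I : ℕ → ℝ → Ω → ℝ) (hI : ∀ M t ω, I M t ω = (A M t).indicator (fun _ => (1:ℝ)) ω)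
    (hIrc : ∀ M ω, ∀ t : ℝ, ContinuousWithinAt (fun s => I M s ω) (Ici t) t)
    (hIll : ∀ M ω, ∀ t : ℝ, ∃ L : ℝ,
      Tendsto (fun s => I M s ω) (nhdsWithin t (Iio t)) (nhds L))
    (hfinact : ∀ᵐ ω ∂P, ∀ t : ℝ, 0 ≤ t →
      {M : ℕ | ∃ u ∈ Icc (0:ℝ) t, I M u ω = 1}.Finite)
    (m : ℕ → MeasurableSpace Ω) (hm : ∀ M, m M ≤ m0)
    (g h : ℕ → ℝ → Ω → ℝ)
    (hg : ∀ M t, g M t =ᵐ[P] P[fun ω => ξ ω * I M t ω|m M])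
    (hh : ∀ M t, h M t =ᵐ[P] P[I M t|m M])
    (hgrc : ∀ M ω, ∀ t : ℝ, ContinuousWithinAt (fun s => g M s ω) (Ici t) t)
    (hgll : ∀ M ω, ∀ t : ℝ, ∃ L : ℝ,
      Tendsto (fun s => g M s ω) (nhdsWithin t (Iio t)) (nhds L))
    (hhrc : ∀ M ω, ∀ t : ℝ, ContinuousWithinAt (fun s => h M s ω) (Ici t) t)
    (hhll : ∀ M ω, ∀ t : ℝ, ∃ L : ℝ,
      Tendsto (fun s => h M s ω) (nhdsWithin t (Iio t)) (nhds L))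
    (hsup : ∀ M, ∀ᵐ ω ∂P, ∃ CM : ℝ, ∀ t : ℝ, I M t ω / h M t ω ≤ CM)
    (G : ℝ → MeasurableSpace Ω) (hGle : ∀ t, G t ≤ m0)
    (hrepr : ∀ M : ℕ, ∀ t : ℝ, ∀ᵐ ω ∂P,
      I M t ω * (P[ξ|G t]) ω = I M t ω * g M t ω / h M t ω)
    (Y : ℝ → Ω → ℝ)
    (hY : ∀ t ω, Y t ω = ∑' M : ℕ, I M t ω * g M t ω / h M t ω) :
    (∀ᵐ ω ∂P, (∀ t : ℝ, 0 ≤ t → ContinuousWithinAt (fun s => Y s ω) (Ici t) t) ∧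
      (∀ t : ℝ, 0 < t → ∃ L : ℝ,
        Tendsto (fun s => Y s ω) (nhdsWithin t (Iio t)) (nhds L))) ∧
    (∀ t : ℝ, 0 ≤ t → Y t =ᵐ[P] P[ξ|G t]) ∧
    (∀ Y' : ℝ → Ω → ℝ,
      (∀ᵐ ω ∂P, (∀ t : ℝ, 0 ≤ t → ContinuousWithinAt (fun s => Y' s ω) (Ici t) t) ∧
        (∀ t : ℝ, 0 < t → ∃ L : ℝ,
          Tendsto (fun s => Y' s ω) (nhdsWithin t (Iio t)) (nhds L))) →
      (∀ t : ℝ, 0 ≤ t → Y' t =ᵐ[P] P[ξ|G t]) →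
      ∀ᵐ ω ∂P, ∀ t : ℝ, 0 ≤ t → Y' t ω = Y t ω) := by
  classical
  -- basic facts about I
  have hIone : ∀ M t ω, ω ∈ A M t → I M t ω = 1 := by
    intro M t ω hmem; rw [hI]; simp [hmem]
  have hIzero : ∀ M t ω, ω ∉ A M t → I M t ω = 0 := by
    intro M t ω hmem; rw [hI]; simp [hmem]
  have hI01 : ∀ M t ω, I M t ω = 0 ∨ I M t ω = 1 := by
    intro M t ω
    by_cases hmem : ω ∈ A M t
    · exact Or.inr (hIone M t ω hmem)
    · exact Or.inl (hIzero M t ω hmem)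
  have hmem_of_one : ∀ M t ω, I M t ω = 1 → ω ∈ A M t := by
    intro M t ω h1
    by_contra hmem
    rw [hIzero M t ω hmem] at h1
    norm_num at h1
  -- a.e. nonnegativity of h at rational times
  have hE2 : ∀ᵐ ω ∂P, ∀ M : ℕ, ∀ q : ℚ, 0 ≤ h M q ω := by
    rw [ae_all_iff]; intro M; rw [ae_all_iff]; intro q
    have h1 : (0:Ω→ℝ) ≤ᵐ[P] P[I M (q:ℝ)|m M] :=
      condExp_nonneg (Filter.Eventually.of_forall (fun ω => by
        rcases hI01 M q ω with h0 | h0 <;> simp [h0]))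
    filter_upwards [hh M q, h1] with ω h2 h3
    rw [h2]; simpa using h3
  have hE3 : ∀ᵐ ω ∂P, ∀ M : ℕ, ∃ C : ℝ, ∀ t : ℝ, I M t ω / h M t ω ≤ C :=
    ae_all_iff.mpr hsup
  -- pointwise nonnegativity of h for good ω
  have hposall : ∀ ω, (∀ M : ℕ, ∀ q : ℚ, 0 ≤ h M q ω) → ∀ M : ℕ, ∀ t : ℝ, 0 ≤ h M t ω := by
    intro ω hω M t
    obtain ⟨x, hxq, hxgt, hxt⟩ := aux_ratseq t
    have hxm : Tendsto x atTop (𝓝[Ici t] t) :=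
      tendsto_nhdsWithin_iff.mpr ⟨hxt, Filter.Eventually.of_forall (fun n => (hxgt n).le)⟩
    have htend : Tendsto (fun n => h M (x n) ω) atTop (𝓝 (h M t ω)) :=
      (hhrc M ω t).tendsto.comp hxm
    refine ge_of_tendsto' htend (fun n => ?_)
    obtain ⟨q, hq⟩ := hxq n
    rw [← hq]; exact hω M q
  -- Y in terms of the unique active index
  have hYsingle : ∀ t ω M0, I M0 t ω = 1 → Y t ω = g M0 t ω / h M0 t ω := by
    intro t ω M0 h1
    rw [hY]
    rw [tsum_eq_single M0 ?_]
    · rw [h1, one_mul]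
    · intro M hM
      have hz : I M t ω = 0 := by
        rcases hI01 M t ω with h0 | h0
        · exact h0
        · exfalso
          obtain ⟨N, _, hNu⟩ := hApart t ω
          have e1 : M = N := hNu M (hmem_of_one M t ω h0)
          have e2 : M0 = N := hNu M0 (hmem_of_one M0 t ω h1)
          exact hM (e1.trans e2.symm)
      rw [hz, zero_mul, zero_div]
  -- Part 1: a.s. càdlàg
  have part1 : ∀ᵐ ω ∂P,
      (∀ t : ℝ, 0 ≤ t → ContinuousWithinAt (fun s => Y s ω) (Ici t) t) ∧
      (∀ t : ℝ, 0 < t → ∃ L : ℝ,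
        Tendsto (fun s => Y s ω) (nhdsWithin t (Iio t)) (nhds L)) := by
    filter_upwards [hfinact, hE2, hE3] with ω hfin hq hc
    have hp : ∀ M : ℕ, ∀ t : ℝ, 0 ≤ h M t ω := hposall ω hq
    constructor
    · -- right continuity
      intro t _
      obtain ⟨M0, hM0mem, _⟩ := hApart t ω
      have hI0t : I M0 t ω = 1 := hIone M0 t ω hM0mem
      have hItend : Tendsto (fun s => I M0 s ω) (𝓝[Ici t] t) (𝓝 1) := by
        have := (hIrc M0 ω t).tendsto; rwa [hI0t] at this
      have hev1 : ∀ᶠ s in 𝓝[Ici t] t, I M0 s ω = 1 :=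
        aux_binary_ev_one (fun s => hI01 M0 s ω) hItend
      have hYeq : ∀ᶠ s in 𝓝[Ici t] t, Y s ω = g M0 s ω / h M0 s ω := by
        filter_upwards [hev1] with s hs; exact hYsingle s ω M0 hs
      show Tendsto (fun s => Y s ω) (𝓝[Ici t] t) (𝓝 (Y t ω))
      by_cases hh0 : h M0 t ω = 0
      · obtain ⟨C, hC⟩ := hc M0
        have hhtend : Tendsto (fun s => h M0 s ω) (𝓝[Ici t] t) (𝓝 0) := by
          have := (hhrc M0 ω t).tendsto; rwa [hh0] at this
        have hhz : ∀ᶠ s in 𝓝[Ici t] t, h M0 s ω = 0 :=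
          aux_hzero hC (fun s => hp M0 s) hev1 hhtend
        have hY0 : ∀ᶠ s in 𝓝[Ici t] t, Y s ω = 0 := by
          filter_upwards [hYeq, hhz] with s h1 h2; rw [h1, h2, div_zero]
        have hyt : Y t ω = 0 := by
          rw [hYsingle t ω M0 hI0t, hh0, div_zero]
        rw [hyt]
        exact Tendsto.congr' (by filter_upwards [hY0] with s hs; exact hs.symm)
          tendsto_const_nhds
      · have hqc : Tendsto (fun s => g M0 s ω / h M0 s ω) (𝓝[Ici t] t)
            (𝓝 (g M0 t ω / h M0 t ω)) :=
          ((hgrc M0 ω t).div (hhrc M0 ω t) hh0).tendsto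
        rw [hYsingle t ω M0 hI0t]
        exact Tendsto.congr' (by filter_upwards [hYeq] with s hs; exact hs.symm) hqc
    · -- left limits
      intro t ht
      set F : Finset ℕ := (hfin t ht.le).toFinset with hF
      have hterm : ∀ M : ℕ, ∃ L : ℝ,
          Tendsto (fun s => I M s ω * g M s ω / h M s ω) (𝓝[Iio t] t) (𝓝 L) := by
        intro M
        obtain ⟨LI, hLI⟩ := hIll M ω t
        obtain ⟨Lg, hLg⟩ := hgll M ω t
        obtain ⟨Lh, hLh⟩ := hhll M ω t
        rcases aux_lim01 (fun s => hI01 M s ω) hLI with h0 | h1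
        · refine ⟨0, ?_⟩
          rw [h0] at hLI
          have hev : ∀ᶠ s in 𝓝[Iio t] t, I M s ω = 0 :=
            aux_binary_ev_zero (fun s => hI01 M s ω) hLI
          exact Tendsto.congr'
            (by filter_upwards [hev] with s hs; rw [hs, zero_mul, zero_div])
            tendsto_const_nhds
        · rw [h1] at hLI
          have hev : ∀ᶠ s in 𝓝[Iio t] t, I M s ω = 1 :=
            aux_binary_ev_one (fun s => hI01 M s ω) hLI
          by_cases hLh0 : Lh = 0
          · refine ⟨0, ?_⟩
            rw [hLh0] at hLh
            obtain ⟨C, hC⟩ := hc M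
            have hhz : ∀ᶠ s in 𝓝[Iio t] t, h M s ω = 0 :=
              aux_hzero hC (fun s => hp M s) hev hLh
            exact Tendsto.congr'
              (by filter_upwards [hhz] with s hs; rw [hs, div_zero])
              tendsto_const_nhds
          · refine ⟨Lg / Lh, ?_⟩
            have hdiv : Tendsto (fun s => g M s ω / h M s ω) (𝓝[Iio t] t)
                (𝓝 (Lg / Lh)) := hLg.div hLh hLh0
            exact Tendsto.congr'
              (by filter_upwards [hev] with s hs; rw [hs, one_mul]) hdiv
      choose L hL using hterm
      refine ⟨∑ M ∈ F, L M, ?_⟩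
      have hsum : Tendsto (fun s => ∑ M ∈ F, I M s ω * g M s ω / h M s ω)
          (𝓝[Iio t] t) (𝓝 (∑ M ∈ F, L M)) :=
        tendsto_finset_sum F (fun M _ => hL M)
      refine Tendsto.congr' ?_ hsum
      have hIoo : ∀ᶠ s in 𝓝[Iio t] t, s ∈ Ioo 0 t :=
        eventually_mem_set.mpr (Ioo_mem_nhdsLT_of_mem ⟨ht, le_refl t⟩)
      filter_upwards [hIoo] with s hs
      rw [hY]
      refine (tsum_eq_sum ?_).symm
      intro M hM
      have hz : I M s ω = 0 := by
        rcases hI01 M s ω with h0 | h0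
        · exact h0
        · exfalso
          apply hM
          rw [hF, Set.Finite.mem_toFinset]
          exact ⟨s, ⟨hs.1.le, hs.2.le⟩, h0⟩
      rw [hz, zero_mul, zero_div]
  -- Part 2: modification
  have part2 : ∀ t : ℝ, Y t =ᵐ[P] P[ξ|G t] := by
    intro t
    have hrep : ∀ᵐ ω ∂P, ∀ M : ℕ,
        I M t ω * (P[ξ|G t]) ω = I M t ω * g M t ω / h M t ω :=
      ae_all_iff.mpr (fun M => hrepr M t)
    filter_upwards [hrep] with ω hω
    obtain ⟨M0, hM0mem, _⟩ := hApart t ω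
    have h1 : I M0 t ω = 1 := hIone M0 t ω hM0mem
    rw [hYsingle t ω M0 h1]
    have := hω M0
    rw [h1, one_mul, one_mul] at this
    exact this.symm
  refine ⟨part1, fun t _ => part2 t, ?_⟩
  -- Part 3: uniqueness
  intro Y' hY'cadlag hY'mod
  have hrat : ∀ᵐ ω ∂P, ∀ q : ℚ, 0 ≤ (q:ℝ) → Y' q ω = Y q ω := by
    rw [ae_all_iff]; intro q
    by_cases hq : 0 ≤ (q:ℝ)
    · filter_upwards [hY'mod q hq, part2 q] with ω h1 h2 _
      rw [h1, h2]
    · filter_upwards with ω h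
      exact absurd h hq
  filter_upwards [hrat, part1, hY'cadlag] with ω hω h1 h2
  intro t ht
  obtain ⟨x, hxq, hxgt, hxt⟩ := aux_ratseq t
  have hxm : Tendsto x atTop (𝓝[Ici t] t) :=
    tendsto_nhdsWithin_iff.mpr ⟨hxt, Filter.Eventually.of_forall (fun n => (hxgt n).le)⟩
  have hty : Tendsto (fun n => Y (x n) ω) atTop (𝓝 (Y t ω)) :=
    (h1.1 t ht).tendsto.comp hxm
  have hty' : Tendsto (fun n => Y' (x n) ω) atTop (𝓝 (Y' t ω)) :=
    (h2.1 t ht).tendsto.comp hxm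
  have heq : (fun n => Y' (x n) ω) = fun n => Y (x n) ω := by
    funext n
    obtain ⟨q, hq⟩ := hxq n
    rw [← hq]
    exact hω q (by rw [hq]; exact le_trans ht (hxgt n).le)
  rw [heq] at hty'
  exact tendsto_nhds_unique hty' hty
end
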